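/- Let n ≥ 2, 1 ≤ p ≤ n, and let g be an integer with 0 ≤ g ≤ (p−1)/2. Then C_{p,g}^{(n)} = Σ_{k=0}^{2g} (−1)^{p−k−1} Σ_{t=max(k−g,0)}^{⌊k/2⌋} binom(n−k+2t, t) · 2^{k−2t} · binom(n, k−2t). (This is the intermediate identity (3.10) established in the proof of Claim 3.8.) -/

import Mathlib

noncomputable section

open Finset PowerSeries

/-- Binomial coefficient `binom b a` with integer arguments,
zero when `a < 0` or `b < a`. -/
def ibinom (b a : ℤ) : ℤ := if a < 0 ∨ b < a then 0 else (b.toNat.choose a.toNat : ℤ)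

/-- One-norm `‖μ‖` of an integer vector. -/
def onenorm {n : ℕ} (μ : Fin n → ℤ) : ℕ := ∑ i, (μ i).natAbs

/-- `Z(μ)`: number of zero coordinates. -/
def zcount {n : ℕ} (μ : Fin n → ℤ) : ℕ := (univ.filter fun i => μ i = 0).card

/-- `N_𝓛(k, ℓ)`. -/
def Ncard {n : ℕ} (L : Set (Fin n → ℤ)) (k ℓ : ℕ) : ℕ :=
  {μ : Fin n → ℤ | μ ∈ L ∧ onenorm μ = k ∧ zcount μ = ℓ}.ncard

/-- `N_𝓛(k)`. -/
def NcardTot {n : ℕ} (L : Set (Fin n → ℤ)) (k : ℕ) : ℕ :=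
  {μ : Fin n → ℤ | μ ∈ L ∧ onenorm μ = k}.ncard

/-- `ϑ_𝓛^{(ℓ)}(z) = Σ_{k≥0} N_𝓛(k,ℓ) z^k`. -/
def thetaL {n : ℕ} (L : Set (Fin n → ℤ)) (ℓ : ℕ) : PowerSeries ℤ :=
  PowerSeries.mk fun k => (Ncard L k ℓ : ℤ)

/-- `ϑ_𝓛(z) = Σ_{k≥0} N_𝓛(k) z^k`. -/
def thetaTot {n : ℕ} (L : Set (Fin n → ℤ)) : PowerSeries ℤ :=
  PowerSeries.mk fun k => (NcardTot L k : ℤ)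

/-- `N_𝓛^red(k,ℓ)`, counting elements of `C(q) ∩ 𝓛`. -/
def NcardRed {n : ℕ} (L : Set (Fin n → ℤ)) (q k ℓ : ℕ) : ℕ :=
  {μ : Fin n → ℤ | (∀ i, |μ i| < (q : ℤ)) ∧ μ ∈ L ∧ onenorm μ = k ∧ zcount μ = ℓ}.ncard

/-- `Φ_𝓛^{(ℓ)}(z) = Σ_{k≥0} N_𝓛^red(k,ℓ) z^k`. -/
def PhiL {n : ℕ} (L : Set (Fin n → ℤ)) (q ℓ : ℕ) : PowerSeries ℤ :=
  PowerSeries.mk fun k => (NcardRed L q k ℓ : ℤ)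

/-- `𝓛` is `q`-periodic: `μ ∈ 𝓛 ↔ μ + qν ∈ 𝓛`. -/
def qPeriodic {n : ℕ} (q : ℕ) (L : Set (Fin n → ℤ)) : Prop :=
  ∀ μ ν : Fin n → ℤ, μ ∈ L ↔ (μ + (q : ℤ) • ν) ∈ L

/-- `M_𝓛(k,p)`. -/
def Mcoef {n : ℕ} (L : Set (Fin n → ℤ)) (k p : ℕ) : ℤ :=
  ∑ ℓ ∈ range (n+1), ∑ r ∈ range ((k-1+p)/2 + 1),
    (Ncard L (k-1+p-2*r) ℓ : ℤ) *
    ∑ j ∈ Icc 1 p, (-1 : ℤ)^(j-1) *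
      ∑ t ∈ range ((p-j)/2 + 1), ibinom ((n : ℤ) - p + j + 2*t) t *
        ∑ β ∈ range (p-j-2*t+1),
          2^(p-j-2*t-β) * ibinom ((n : ℤ) - ℓ) β * ibinom (ℓ : ℤ) ((p-j-2*t-β : ℕ)) *
          ∑ α ∈ range (β+1), ibinom (β : ℤ) α *
            ∑ i ∈ range j, ibinom ((r : ℤ) - i - p + j + α + t + n - 2) ((n : ℤ) - 2)

/-- `Ã_p^{(ℓ)}(z) = z^p A_p^{(ℓ)}(z)`. -/
def Atilde (n p ℓ : ℕ) : PowerSeries ℤ :=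
  ∑ j ∈ Icc 1 p, C ((-1 : ℤ)^(j-1)) *
    ∑ t ∈ range ((p-j)/2 + 1), C (ibinom ((n : ℤ) - p + j + 2*t) t) *
      ∑ β ∈ range (p-j-2*t+1),
        C (2^(p-j-2*t-β) * ibinom ((n : ℤ) - ℓ) β * ibinom (ℓ : ℤ) ((p-j-2*t-β : ℕ))) *
        ∑ α ∈ range (β+1), C (ibinom (β : ℤ) α) *
          ∑ i ∈ range j, (X : PowerSeries ℤ)^(2*p - 2*(j+t+α-i))

/-- `Υ_m^{(ℓ)}(z)`; zero when `m < 0`. -/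
def Upsilon {n : ℕ} (L : Set (Fin n → ℤ)) (m : ℤ) (ℓ : ℕ) : PowerSeries ℤ :=
  if m < 0 then 0 else
    ∑ h ∈ range (m.toNat + 1),
      C (∑ s ∈ range (h/2 + 1), (Ncard L (h - 2*s) ℓ : ℤ) * ((s + n - 2).choose (n-2) : ℤ)) *
        (X : PowerSeries ℤ)^h

/-- `B̃_{𝓛,p}^{(ℓ)}(z) = z^p B_{𝓛,p}^{(ℓ)}(z)`. -/
def Btilde {n : ℕ} (L : Set (Fin n → ℤ)) (p ℓ : ℕ) : PowerSeries ℤ :=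
  ∑ j ∈ Icc 1 p, C ((-1 : ℤ)^(j-1)) *
    ∑ t ∈ range ((p-j)/2 + 1), C (ibinom ((n : ℤ) - p + j + 2*t) t) *
      ∑ β ∈ range (p-j-2*t+1),
        C (2^(p-j-2*t-β) * ibinom ((n : ℤ) - ℓ) β * ibinom (ℓ : ℤ) ((p-j-2*t-β : ℕ))) *
        ∑ α ∈ range (β+1), C (ibinom (β : ℤ) α) *
          ∑ i ∈ range j,
            (X : PowerSeries ℤ)^(2*p - 2*(j+t+α-i)) *
              Upsilon L (2*((j : ℤ) + t + α - i) - p - 1) ℓ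

/-- `C_{p,g}^{(ℓ)}`. -/
def Cpg (n p g ℓ : ℕ) : ℤ :=
  ∑ j ∈ Icc 1 p, (-1 : ℤ)^(j-1) *
    ∑ t ∈ range ((p-j)/2 + 1), ibinom ((n : ℤ) - p + j + 2*t) t *
      ∑ β ∈ range (p-j-2*t+1),
        2^(p-j-2*t-β) * ibinom ((n : ℤ) - ℓ) β * ibinom (ℓ : ℤ) ((p-j-2*t-β : ℕ)) *
        ∑ i ∈ range j, ibinom (β : ℤ) ((p : ℤ) + i - j - t - g)

/-! At `ℓ = n` the factor `binom(n - ℓ, β) = binom(0, β)` kills every `β ≠ 0`, and then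
`Σ_{i<j} binom(0, p + i - j - t - g)` is the indicator of `p ≤ j + t + g` (the index
`j + t + g - p` is `< j` because `t + g < p`). Writing `k = p - j`, the surviving `t` are
those with `k - g ≤ t ≤ k/2`, and there are none unless `k ≤ 2g`. -/

lemma ibinom_natCast (b a : ℕ) : ibinom b a = b.choose a := by
  unfold ibinom
  split_ifs
  · simp [Nat.choose_eq_zero_of_lt (by omega : b < a)]
  · simp

lemma ibinom_zero_left (a : ℤ) : ibinom 0 a = if a = 0 then 1 else 0 := by
  unfold ibinom
  split_ifs <;> first | omega | simp_all

lemma sum_range_ibinom_zero_left_sub (j : ℕ) (c : ℤ) :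
    ∑ i ∈ range j, ibinom 0 (i - c) = if 0 ≤ c ∧ c < j then 1 else 0 := by
  induction j with
  | zero => simp
  | succ j ih =>
    rw [sum_range_succ, ih, ibinom_zero_left]
    split_ifs <;> omega

lemma sum_Icc_one_eq_sum_range_sub {M : Type*} [AddCommMonoid M] (f : ℕ → M) (p : ℕ) :
    ∑ j ∈ Icc 1 p, f j = ∑ k ∈ range p, f (p - k) := by
  rw [range_eq_Ico, sum_Ico_reflect f 0 (Nat.le_succ p), Nat.add_sub_cancel_left, Nat.sub_zero]
  rfl

lemma sum_range_ite_le_add_eq_sum_Icc {M : Type*} [AddCommMonoid M] (f : ℕ → M) (k g : ℕ) :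
    ∑ t ∈ range (k/2 + 1), (if k ≤ t + g then f t else 0) = ∑ t ∈ Icc (k - g) (k/2), f t := by
  rw [← sum_filter]
  congr 1
  ext t
  simp only [mem_filter, mem_range, mem_Icc]
  omega

lemma Cpg_self_eq {n p g : ℕ} (hg : 2*g + 1 ≤ p) :
    Cpg n p g n = ∑ j ∈ Icc 1 p, (-1 : ℤ)^(j-1) *
      ∑ t ∈ range ((p-j)/2 + 1), if p ≤ j + t + g then
        ibinom ((n : ℤ) - p + j + 2*t) t * (2^(p-j-2*t) * (n.choose (p-j-2*t) : ℤ)) else 0 := by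
  unfold Cpg
  refine sum_congr rfl fun j hj => congrArg _ <| sum_congr rfl fun t ht => ?_
  have hjp := mem_Icc.mp hj
  have htj := mem_range.mp ht
  rw [sub_self, sum_eq_single_of_mem 0 (by simp) fun β _ hβ => by
    rw [ibinom_zero_left, if_neg (by exact_mod_cast hβ)]; ring]
  have hsum : ∑ i ∈ range j, ibinom 0 ((p : ℤ) + i - j - t - g) =
      if p ≤ j + t + g then 1 else 0 := by
    simp_rw [show ∀ i : ℤ, (p : ℤ) + i - j - t - g = i - (j + t + g - p) by intro; ring]
    rw [sum_range_ibinom_zero_left_sub]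
    exact if_congr (by omega) rfl rfl
  simp only [Nat.cast_zero, Nat.sub_zero]
  rw [hsum, ibinom_zero_left, if_pos rfl, ibinom_natCast]
  split_ifs <;> ring

lemma Cpg_self_eq_sum_range {n p g : ℕ} (hpn : p ≤ n) (hg : 2*g + 1 ≤ p) :
    Cpg n p g n = ∑ k ∈ range p, (-1 : ℤ)^(p-k-1) *
        ∑ t ∈ Icc (k-g) (k/2), ((n-k+2*t).choose t : ℤ) * 2^(k-2*t) * (n.choose (k-2*t) : ℤ) := by
  rw [Cpg_self_eq hg, sum_Icc_one_eq_sum_range_sub]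
  refine sum_congr rfl fun k hk => ?_
  have hkp := mem_range.mp hk
  rw [show p - (p - k) = k by omega, ← sum_range_ite_le_add_eq_sum_Icc]
  refine congrArg _ <| sum_congr rfl fun t _ => if_congr (by omega) ?_ rfl
  rw [show (n : ℤ) - p + (p - k : ℕ) + 2*t = ((n - k + 2*t : ℕ) : ℤ) by omega, ibinom_natCast]
  ring

theorem stmt11_general {n p g : ℕ} (hpn : p ≤ n)
    (hg : 2*g + 1 ≤ p) :
    Cpg n p g n =
      ∑ k ∈ range (2*g+1), (-1 : ℤ)^(p-k-1) *
        ∑ t ∈ Icc (k-g) (k/2),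
          ((n-k+2*t).choose t : ℤ) * 2^(k-2*t) * (n.choose (k-2*t) : ℤ) := by
  rw [Cpg_self_eq_sum_range hpn hg]
  refine (sum_subset (range_subset_range.mpr hg) fun k _ hk => ?_).symm
  rw [Icc_eq_empty (by simp at hk; omega), sum_empty, mul_zero]

/-- identity (3.10):
`C_{p,g}^{(n)} = Σ_{k=0}^{2g} (-1)^{p-k-1} Σ_{t=max(k-g,0)}^{⌊k/2⌋}
  binom(n-k+2t, t) 2^{k-2t} binom(n, k-2t)`. -/
theorem stmt11 {n p g : ℕ} (hn : 2 ≤ n) (hp1 : 1 ≤ p) (hpn : p ≤ n)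
    (hg : 2*g + 1 ≤ p) :
    Cpg n p g n =
      ∑ k ∈ range (2*g+1), (-1 : ℤ)^(p-k-1) *
        ∑ t ∈ Icc (k-g) (k/2),
          ((n-k+2*t).choose t : ℤ) * 2^(k-2*t) * (n.choose (k-2*t) : ℤ) :=
  stmt11_general hpn hg
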